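/- Zlotnik's lemma (Lemma 2.7). Let T > 0 and let the function y ∈ W^{1,1}(0,T) satisfy y′(t) = g(y(t)) + b̄′(t) on [0,T] with y(0) = y⁰, where g ∈ C(ℝ) and b̄ ∈ W^{1,1}(0,T). Suppose g(ξ) → −∞ as ξ → ∞, and suppose there exist constants N₀ ≥ 0 and N₁ ≥ 0 such that b̄(t₂) − b̄(t₁) ≤ N₀ + N₁(t₂ − t₁) for all 0 ≤ t₁ < t₂ ≤ T. Let ξ̄ be a constant such that g(ξ) ≤ −N₁ for all ξ ≥ ξ̄. Then y(t) ≤ max{y⁰, ξ̄} + N₀ < ∞ for all t ∈ [0,T]. -/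

import Mathlib

open MeasureTheory Real Set Filter ENNReal NNReal Topology

noncomputable section

abbrev E3 := EuclideanSpace ℝ (Fin 3)

def fromFun (f : Fin 3 → ℝ) : E3 := (WithLp.equiv 2 (Fin 3 → ℝ)).symm f

def vec3 (a b c : ℝ) : E3 := fromFun ![a, b, c]

def dot3 (v w : E3) : ℝ := ∑ i, v i * w i

def cross3 (v w : E3) : E3 :=
  vec3 (v 1 * w 2 - v 2 * w 1) (v 2 * w 0 - v 0 * w 2) (v 0 * w 1 - v 1 * w 0)

/-- `i`-th partial derivative of a scalar function on `E3`. -/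
def pd (i : Fin 3) (f : E3 → ℝ) (x : E3) : ℝ := fderiv ℝ f x (EuclideanSpace.single i 1)

def grad3 (f : E3 → ℝ) (x : E3) : E3 := fromFun fun i => pd i f x

def vdiv (u : E3 → E3) (x : E3) : ℝ := ∑ i, pd i (fun y => u y i) x

def vcurl (u : E3 → E3) (x : E3) : E3 :=
  vec3 (pd 1 (fun y => u y 2) x - pd 2 (fun y => u y 1) x)
       (pd 2 (fun y => u y 0) x - pd 0 (fun y => u y 2) x)
       (pd 0 (fun y => u y 1) x - pd 1 (fun y => u y 0) x)

/-- directional derivative `(v · ∇) u`. -/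
def dirDeriv (u : E3 → E3) (v : E3) (x : E3) : E3 :=
  fromFun fun i => ∑ j, v j * pd j (fun y => u y i) x

/-- strain tensor `D(u) = (∇u + (∇u)ᵀ)/2`. -/
def strain (u : E3 → E3) (x : E3) (i j : Fin 3) : ℝ :=
  (pd j (fun y => u y i) x + pd i (fun y => u y j) x) / 2

def strainNorm (u : E3 → E3) (x : E3) : ℝ :=
  Real.sqrt (∑ i, ∑ j, strain u x i j ^ 2)

def strainVec (u : E3 → E3) (x n : E3) : E3 := fromFun fun i => ∑ j, strain u x i j * n j

def divStrain (u : E3 → E3) (x : E3) : E3 :=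
  fromFun fun i => ∑ j, pd j (fun y => strain u y i j) x

def lap3 (f : E3 → ℝ) (x : E3) : ℝ := ∑ j, pd j (fun y => pd j f y) x

def vecLap (u : E3 → E3) (x : E3) : E3 := fromFun fun i => lap3 (fun y => u y i) x

/-- tangential part of a vector `v` relative to the unit normal `n`. -/
def tangPart (v n : E3) : E3 := v - dot3 v n • n

def gradNormV (u : E3 → E3) (x : E3) : ℝ :=
  Real.sqrt (∑ i, ∑ j, (pd j (fun y => u y i) x) ^ 2)

def grad2NormV (u : E3 → E3) (x : E3) : ℝ :=
  Real.sqrt (∑ i, ∑ j, ∑ k, (pd k (fun y => pd j (fun z => u z i) y) x) ^ 2)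

def grad3NormV (u : E3 → E3) (x : E3) : ℝ :=
  Real.sqrt (∑ i, ∑ j, ∑ k, ∑ l,
    (pd l (fun y => pd k (fun z => pd j (fun w => u w i) z) y) x) ^ 2)

def grad2NormS (f : E3 → ℝ) (x : E3) : ℝ :=
  Real.sqrt (∑ i, ∑ j, (pd i (fun y => pd j f y) x) ^ 2)

/-- the outward unit normal of the exterior domain `Ω = Sᶜ`, expressed through a
defining function `Φ` (with `Φ < 0` inside `S` and `Φ > 0` in `Ω`). -/
def outNormal (Φ : E3 → ℝ) (x : E3) : E3 := -‖grad3 Φ x‖⁻¹ • grad3 Φ x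

/-- `S` is a compact simply connected set containing `0`, contained in the closed unit
ball, whose complement `Ω = Sᶜ` is an exterior domain with smooth boundary, described by
the smooth defining function `Φ`. -/
structure SmoothExteriorDomain (S : Set E3) (Φ : E3 → ℝ) : Prop where
  compactS : IsCompact S
  simplyConnS : SimplyConnectedSpace S
  zero_mem : (0 : E3) ∈ S
  subset_ball : S ⊆ Metric.closedBall 0 1
  smoothPhi : ContDiff ℝ (⊤ : ℕ∞) Φ
  S_eq : S = {x | Φ x ≤ 0}
  grad_ne : ∀ x ∈ frontier S, grad3 Φ x ≠ 0

/-- `S` admits an axis of symmetry: it is preserved by every rotation around this axis. -/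
def Axisymmetric (S : Set E3) : Prop :=
  ∃ p v : E3, v ≠ 0 ∧ ∀ R : E3 ≃ₗᵢ[ℝ] E3, R v = v →
    LinearMap.det (R.toLinearEquiv : E3 →ₗ[ℝ] E3) = 1 →
    (fun x => p + R (x - p)) '' S = S

/-- volume measure on the exterior domain `Ω = Sᶜ`. -/
def volΩ (S : Set E3) : Measure E3 := volume.restrict Sᶜ

/-- surface measure on the boundary `∂Ω`. -/
def surfΩ (S : Set E3) : Measure E3 := (Measure.hausdorffMeasure 2).restrict (frontier S)

def intΩ (S : Set E3) (f : E3 → ℝ) : ℝ := ∫ x in Sᶜ, f x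

def intBdry (S : Set E3) (f : E3 → ℝ) : ℝ := ∫ x, f x ∂(surfΩ S)

/-- the BMO seminorm on `Ω`. -/
def bmoSemi (Ω : Set E3) (f : E3 → ℝ) : ℝ≥0∞ :=
  ⨆ (x : E3) (r : ℝ) (_ : 0 < r),
    (volume (Ω ∩ Metric.closedBall x r))⁻¹ *
      ∫⁻ y in Ω ∩ Metric.closedBall x r,
        (‖f y - ⨍ z in Ω ∩ Metric.closedBall x r, f z‖₊ : ℝ≥0∞)

/-- the BMO norm `‖f‖_{L²} + [f]_{BMO}` on `Ω`. -/
def bmoNorm (Ω : Set E3) (f : E3 → ℝ) : ℝ≥0∞ :=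
  eLpNorm f 2 (volume.restrict Ω) + bmoSemi Ω f

/-- `ω ∈ W^{4,1}(0,∞)` (classical-derivative rendering). -/
def MemW41 (ω : ℝ → ℝ) : Prop :=
  ContDiff ℝ 4 ω ∧ ∀ k ≤ 4, IntegrableOn (iteratedDeriv k ω) (Ioi 0)

def W41norm (ω : ℝ → ℝ) : ℝ :=
  ∑ k ∈ Finset.range 5, ∫ t in Ioi (0 : ℝ), |iteratedDeriv k ω t|

def phiCut (ε : ℝ) (x : E3) : ℝ :=
  if ‖x‖ < 2 then 1 else Real.exp (-(ε ^ 5 * (‖x‖ - 2) ^ 5))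

def omegaVec (w : ℝ) : E3 := vec3 0 0 w

/-- `ω⃗ × x`. -/
def rotX (w : ℝ) (x : E3) : E3 := cross3 (omegaVec w) x

/-- the auxiliary field `b(x,t) = -½ ∇×(φ(x)|x|² ω⃗(t))`. -/
def bField (ε : ℝ) (ω : ℝ → ℝ) (t : ℝ) (x : E3) : E3 :=
  (-(ω t) / 2) • vcurl (fun y => vec3 0 0 (phiCut ε y * ‖y‖ ^ 2)) x

/-- `F(b) = (ω⃗×x)·∇b − b·∇b − ω⃗×b − b_t`. -/
def FbField (ε : ℝ) (ω : ℝ → ℝ) (t : ℝ) (x : E3) : E3 :=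
  dirDeriv (bField ε ω t) (rotX (ω t) x) x
  - dirDeriv (bField ε ω t) (bField ε ω t x) x
  - cross3 (omegaVec (ω t)) (bField ε ω t x)
  - deriv (fun s => bField ε ω s x) t

/-- pressure `P(ρ) = aρ^γ`. -/
def Pfun (a γ : ℝ) (f : E3 → ℝ) : E3 → ℝ := fun x => a * f x ^ γ
end

/-!
Let `M = max (y 0) ξbar`. If `y t > M`, go back to the last time `s < t` with `y s ≤ M`.
On `(s, t)` we have `y ≥ ξbar`, so `(y - b)' = g (y) ≤ -N₁` there, and the growth condition on `b`
gives `y t - y s ≤ b t - b s - N₁ (t - s) ≤ N₀`.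
-/

theorem ContinuousOn.exists_last_le_of_lt {α β : Type*} [ConditionallyCompleteLinearOrder α]
    [TopologicalSpace α] [OrderTopology α] [LinearOrder β] [TopologicalSpace β]
    [OrderClosedTopology β] {f : α → β} {a t : α} {M : β} (hat : a ≤ t)
    (hf : ContinuousOn f (Icc a t)) (ha : f a ≤ M) (ht : M < f t) :
    ∃ s ∈ Ico a t, f s ≤ M ∧ ∀ x ∈ Ioc s t, M < f x := by
  set A := Icc a t ∩ f ⁻¹' Iic M
  have hbdd : BddAbove A := ⟨t, fun x hx => hx.1.2⟩
  obtain ⟨⟨has, hst⟩, hs⟩ : sSup A ∈ A :=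
    (hf.preimage_isClosed_of_isClosed isClosed_Icc isClosed_Iic).csSup_mem
      ⟨a, left_mem_Icc.2 hat, ha⟩ hbdd
  refine ⟨sSup A, ⟨has, hst.lt_of_ne fun h => (h ▸ hs).not_gt ht⟩, hs, fun x hx => ?_⟩
  by_contra! hxM
  exact (le_csSup hbdd ⟨⟨has.trans hx.1.le, hx.2⟩, hxM⟩).not_gt hx.1

theorem image_sub_le_of_hasDerivAt_add_le {y b f b' : ℝ → ℝ} {s t N : ℝ} (hst : s ≤ t)
    (hb : ∀ x ∈ Icc s t, HasDerivAt b (b' x) x)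
    (hy : ∀ x ∈ Icc s t, HasDerivAt y (f x + b' x) x) (hf : ∀ x ∈ Ioo s t, f x ≤ -N) :
    (y t - b t) - (y s - b s) ≤ -N * (t - s) := by
  have hderiv : ∀ x ∈ Icc s t, HasDerivAt (y - b) (f x) x := fun x hx => by
    simpa using (hy x hx).sub (hb x hx)
  refine (convex_Icc s t).image_sub_le_mul_sub_of_deriv_le
    (fun x hx => (hderiv x hx).continuousAt.continuousWithinAt)
    (fun x hx => (hderiv x (interior_subset hx)).differentiableAt.differentiableWithinAt)
    (fun x hx => ?_) s (left_mem_Icc.2 hst) t (right_mem_Icc.2 hst) hst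
  rw [interior_Icc] at hx
  rw [(hderiv x (Ioo_subset_Icc_self hx)).deriv]
  exact hf x hx

theorem zlotnik_lemma_general (T : ℝ) (y b : ℝ → ℝ) (b' : ℝ → ℝ) (g : ℝ → ℝ)
    (hb : ∀ t ∈ Icc (0 : ℝ) T, HasDerivAt b (b' t) t)
    (hy : ∀ t ∈ Icc (0 : ℝ) T, HasDerivAt y (g (y t) + b' t) t)
    (N₀ N₁ : ℝ) (hN₀ : 0 ≤ N₀)
    (hbb : ∀ t₁ t₂ : ℝ, 0 ≤ t₁ → t₁ < t₂ → t₂ ≤ T → b t₂ - b t₁ ≤ N₀ + N₁ * (t₂ - t₁))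
    (ξbar : ℝ) (hξ : ∀ ξ ≥ ξbar, g ξ ≤ -N₁) :
    ∀ t ∈ Icc (0 : ℝ) T, y t ≤ max (y 0) ξbar + N₀ := by
  intro t ⟨ht0, htT⟩
  set M := max (y 0) ξbar
  by_cases hytM : y t ≤ M
  · linarith
  have hsub : Icc 0 t ⊆ Icc 0 T := Icc_subset_Icc_right htT
  obtain ⟨s, ⟨hs0, hst⟩, hysM, hy_gt⟩ :=
    ContinuousOn.exists_last_le_of_lt ht0
      (fun x hx => (hy x (hsub hx)).continuousAt.continuousWithinAt)
      (le_max_left _ ξbar) (not_le.1 hytM)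
  have hsubst : Icc s t ⊆ Icc 0 T := Icc_subset_Icc hs0 htT
  have hincr := image_sub_le_of_hasDerivAt_add_le hst.le (fun x hx => hb x (hsubst hx))
    (fun x hx => hy x (hsubst hx))
    (fun x hx => hξ _ ((le_max_right (y 0) ξbar).trans (hy_gt x (Ioo_subset_Ioc_self hx)).le))
  linarith [hbb s t hs0 hst htT]

/-- **Zlotnik's lemma** (Lemma 2.7). -/
theorem zlotnik_lemma (T : ℝ) (hT : 0 < T) (y b : ℝ → ℝ) (b' : ℝ → ℝ) (g : ℝ → ℝ)
    (hg : Continuous g)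
    (hb : ∀ t ∈ Icc (0 : ℝ) T, HasDerivAt b (b' t) t)
    (hy : ∀ t ∈ Icc (0 : ℝ) T, HasDerivAt y (g (y t) + b' t) t)
    (hg_inf : Tendsto g atTop atBot)
    (N₀ N₁ : ℝ) (hN₀ : 0 ≤ N₀) (hN₁ : 0 ≤ N₁)
    (hbb : ∀ t₁ t₂ : ℝ, 0 ≤ t₁ → t₁ < t₂ → t₂ ≤ T → b t₂ - b t₁ ≤ N₀ + N₁ * (t₂ - t₁))
    (ξbar : ℝ) (hξ : ∀ ξ ≥ ξbar, g ξ ≤ -N₁) :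
    ∀ t ∈ Icc (0 : ℝ) T, y t ≤ max (y 0) ξbar + N₀ :=
  zlotnik_lemma_general T y b b' g hb hy N₀ N₁ hN₀ hbb ξbar hξ
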